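/- Let Γ = ⟨α_1, …, α_k⟩ ⊂ ℕ^d be an affine semigroup, 𝕂 a field, and let G be a reduced Gröbner basis of the defining ideal I_{Γ_H} ⊂ 𝕂[t, y_1, …, y_k] of Γ_H with respect to a lexicographic monomial order in which t is greater than every y_i. For j ≥ 0 let J_j = ⟨y^z − y^w : t^i y^z − y^w ∈ G for some i ≤ j⟩. Then J_j equals the ideal I_j = ⟨y^z − y^w : φ_Γ(z) = φ_Γ(w) and ||z| − |w|| ≤ j⟩ for every j ≥ 0. -/

import Mathlib

open Finset

/-- The factorization homomorphism `φ_Γ : ℕ^k → ℕ^d` determined by the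
generators `α 1, …, α k`. -/
def phi {d k : ℕ} (α : Fin k → Fin d → ℕ) (z : Fin k → ℕ) : Fin d → ℕ :=
  ∑ i, z i • α i

/-- The length `|z|` of a factorization. -/
def len {k : ℕ} (z : Fin k → ℕ) : ℕ := ∑ i, z i

/-- The length set `L_Γ(γ)`. -/
def lengthSet {d k : ℕ} (α : Fin k → Fin d → ℕ) (γ : Fin d → ℕ) : Set ℕ :=
  len '' {z | phi α z = γ}

/-- The set of successive differences (gaps) of a set of naturals. -/
def deltaOf (L : Set ℕ) : Set ℕ :=
  {δ | 0 < δ ∧ ∃ a, a ∈ L ∧ a + δ ∈ L ∧ ∀ c ∈ L, ¬(a < c ∧ c < a + δ)}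

/-- The delta set `Δ(Γ)` of the affine semigroup generated by `α`. -/
def deltaSet {d k : ℕ} (α : Fin k → Fin d → ℕ) : Set ℕ :=
  ⋃ γ ∈ Set.range (phi α), deltaOf (lengthSet α γ)

/-- The monomial `y^z = y_1^{z_1} ⋯ y_k^{z_k}` in `𝕂[y_1,…,y_k]`. -/
noncomputable def monoY (𝕂 : Type*) [CommSemiring 𝕂] {k : ℕ} (z : Fin k → ℕ) :
    MvPolynomial (Fin k) 𝕂 :=
  MvPolynomial.monomial (Finsupp.equivFunOnFinite.symm z) 1

/-- The ideal `I_j = ⟨y^z − y^w : φ_Γ(z) = φ_Γ(w), ||z|−|w|| ≤ j⟩`. -/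
noncomputable def idealI (𝕂 : Type*) [Field 𝕂] {d k : ℕ} (α : Fin k → Fin d → ℕ)
    (j : ℕ) : Ideal (MvPolynomial (Fin k) 𝕂) :=
  Ideal.span {f | ∃ z w : Fin k → ℕ, phi α z = phi α w ∧
    Nat.dist (len z) (len w) ≤ j ∧ f = monoY 𝕂 z - monoY 𝕂 w}

/-! We work in `𝕂[t, y_1, …, y_k] = MvPolynomial (Fin (k+1)) 𝕂`, where the
variable indexed by `0` is `t` and the variable indexed by `i+1` is `y_i`.
The lexicographic order on exponent vectors `Fin (k+1) →₀ ℕ` (via `Finsupp.Lex`,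
comparing the exponent of `t` first) is then a lexicographic monomial order in
which `t` is greater than every `y_i`. -/

/-- The exponent vector of the monomial `t^i y^z`. -/
noncomputable def expTY {k : ℕ} (i : ℕ) (z : Fin k → ℕ) : Fin (k + 1) →₀ ℕ :=
  Finsupp.equivFunOnFinite.symm (Fin.cons i z)

/-- The monomial `t^i y^z` in `𝕂[t, y_1, …, y_k]`. -/
noncomputable def monoT (𝕂 : Type*) [CommSemiring 𝕂] {k : ℕ} (i : ℕ) (z : Fin k → ℕ) :
    MvPolynomial (Fin (k + 1)) 𝕂 :=
  MvPolynomial.monomial (expTY i z) 1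

/-- The leading (initial) exponent of `f` with respect to the lexicographic
order with `t` greatest. -/
noncomputable def leadExp {𝕂 : Type*} [CommSemiring 𝕂] {k : ℕ}
    (f : MvPolynomial (Fin (k + 1)) 𝕂) : Fin (k + 1) →₀ ℕ :=
  ofLex (f.support.sup toLex)

/-- The initial term of `f` with respect to the lexicographic order with `t`
greatest. -/
noncomputable def initTerm {𝕂 : Type*} [CommSemiring 𝕂] {k : ℕ}
    (f : MvPolynomial (Fin (k + 1)) 𝕂) : MvPolynomial (Fin (k + 1)) 𝕂 :=
  MvPolynomial.monomial (leadExp f) (MvPolynomial.coeff (leadExp f) f)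

/-- `G` is a Gröbner basis of `I` (w.r.t. the lex order with `t` greatest):
`G` generates `I` and the initial terms of elements of `G` generate the ideal
generated by the initial terms of all nonzero elements of `I`. -/
def IsGroebnerBasis {𝕂 : Type*} [Field 𝕂] {k : ℕ}
    (I : Ideal (MvPolynomial (Fin (k + 1)) 𝕂))
    (G : Set (MvPolynomial (Fin (k + 1)) 𝕂)) : Prop :=
  G ⊆ (I : Set (MvPolynomial (Fin (k + 1)) 𝕂)) ∧ Ideal.span G = I ∧
    Ideal.span (initTerm '' G) = Ideal.span (initTerm '' {f | f ∈ I ∧ f ≠ 0})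

/-- `G` is reduced: every element is monic and no monomial occurring in an
element of `G` is divisible by the initial monomial of a different element. -/
def IsReducedGB {𝕂 : Type*} [Field 𝕂] {k : ℕ}
    (G : Set (MvPolynomial (Fin (k + 1)) 𝕂)) : Prop :=
  (∀ g ∈ G, MvPolynomial.coeff (leadExp g) g = 1) ∧
    ∀ g ∈ G, ∀ g' ∈ G, g' ≠ g → ∀ m ∈ g.support, ¬ leadExp g' ≤ m

/-- The defining ideal `I_{Γ_H}` of
`Γ_H = ⟨(1,0), (1,α_1), …, (1,α_k)⟩ ⊂ ℕ^{1+d}`, namely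
`⟨t^{|w|−|z|} y^z − y^w : φ_Γ(z) = φ_Γ(w), |z| ≤ |w|⟩`. -/
noncomputable def idealGH (𝕂 : Type*) [Field 𝕂] {d k : ℕ}
    (α : Fin k → Fin d → ℕ) : Ideal (MvPolynomial (Fin (k + 1)) 𝕂) :=
  Ideal.span {f | ∃ z w : Fin k → ℕ, phi α z = phi α w ∧ len z ≤ len w ∧
    f = monoT 𝕂 (len w - len z) z - monoT 𝕂 0 w}

/-!
An element `t^i y^z - y^w` of `I_{Γ_H}` is homogeneous for the `Γ_H`-grading `t ↦ (1, 0)`,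
`y_i ↦ (1, α_i)`, so `φ(z) = φ(w)` and `i + |z| = |w|`; this gives `J_j ⊆ I_j`. Conversely, every
element of the reduced basis `G` is such a binomial `t^a y^u - y^v`. If `y^z - y^w ∈ I_j` with
`|w| - |z| = i ≤ j`, then `t^i y^z - y^w ∈ I_{Γ_H}`, and its leading monomial is divisible by the
leading monomial `t^a y^u` of some element of `G`, with `a ≤ i`. Trading `y^u` for `y^v` costs an
element of `J_a ⊆ J_j` and leaves a binomial of the same kind that is smaller in the lex order, so
well-founded induction shows `y^z - y^w ∈ J_j`.
-/

open MvPolynomial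

section Exponents

variable {k : ℕ}

@[simp] lemma expTY_apply_zero (i : ℕ) (z : Fin k → ℕ) : expTY i z 0 = i := rfl

@[simp] lemma expTY_apply_succ (i : ℕ) (z : Fin k → ℕ) (m : Fin k) :
    expTY i z m.succ = z m := rfl

lemma expTY_add (i i' : ℕ) (z z' : Fin k → ℕ) :
    expTY i z + expTY i' z' = expTY (i + i') (z + z') := by
  ext m
  cases m using Fin.cases <;> rfl

lemma exists_expTY_eq (e : Fin (k + 1) →₀ ℕ) : ∃ i z, expTY i z = e :=
  ⟨e 0, fun m => e m.succ, by ext m; cases m using Fin.cases <;> rfl⟩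

lemma expTY_le_expTY_iff {i i' : ℕ} {z z' : Fin k → ℕ} :
    expTY i z ≤ expTY i' z' ↔ i ≤ i' ∧ z ≤ z' := by
  simp [Finsupp.le_def, Fin.forall_fin_succ, Pi.le_def]

lemma expTY_inj {i i' : ℕ} {z z' : Fin k → ℕ} :
    expTY i z = expTY i' z' ↔ i = i' ∧ z = z' := by
  simp only [le_antisymm_iff, expTY_le_expTY_iff]
  tauto

lemma toLex_expTY_lt_of_lt {i i' : ℕ} (h : i < i') (z z' : Fin k → ℕ) :
    toLex (expTY i z) < toLex (expTY i' z') :=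
  Finsupp.Lex.lt_iff.2 ⟨0, fun m hm => absurd hm (Fin.not_lt_zero m), h⟩

lemma len_add (z z' : Fin k → ℕ) : len (z + z') = len z + len z' :=
  Finset.sum_add_distrib

lemma phi_add {d : ℕ} (α : Fin k → Fin d → ℕ) (z z' : Fin k → ℕ) :
    phi α (z + z') = phi α z + phi α z' := by
  simp only [phi, Pi.add_apply, add_smul, Finset.sum_add_distrib]

variable (𝕂 : Type*) [CommSemiring 𝕂]

lemma monoY_mul (z z' : Fin k → ℕ) : monoY 𝕂 z * monoY 𝕂 z' = monoY 𝕂 (z + z') := by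
  rw [monoY, monoY, monomial_mul, mul_one, monoY]
  congr 2
  ext m
  rfl

end Exponents

lemma Finsupp.exists_ne_map_eq_of_mapDomain_eq_zero {α β M : Type*} [AddCommMonoid M]
    {f : α → β} {x : α →₀ M} (hx : x.mapDomain f = 0) {a : α} (ha : a ∈ x.support) :
    ∃ b ∈ x.support, b ≠ a ∧ f b = f a := by
  classical
  by_contra! hfib
  have hsum := Finsupp.mapDomain_apply_eq_sum f x (a := a)
  rw [hx, Finsupp.zero_apply, Finset.sum_eq_single_of_mem a (by simpa using ha)
    fun b hb hba => absurd (Finset.mem_filter.1 hb).2 (hfib b (Finset.mem_filter.1 hb).1 hba)]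
    at hsum
  exact Finsupp.mem_support_iff.1 ha hsum.symm

section Homogenization

variable {d k : ℕ} (α : Fin k → Fin d → ℕ)

/-- The `ℕ × ℕ^d`-grading of `𝕂[t, y]` given by `t ↦ (1, 0)` and `y_i ↦ (1, α_i)`, whose
monoid of degrees is `Γ_H`. -/
def degH : (Fin (k + 1) →₀ ℕ) →+ ℕ × (Fin d → ℕ) where
  toFun e := (∑ m, e m, ∑ m : Fin k, e m.succ • α m)
  map_zero' := by simp
  map_add' x y := by simp [Finset.sum_add_distrib, add_smul]

lemma degH_expTY (i : ℕ) (z : Fin k → ℕ) : degH α (expTY i z) = (i + len z, phi α z) := by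
  simp only [degH, AddMonoidHom.coe_mk, ZeroHom.coe_mk, Fin.sum_univ_succ, expTY_apply_zero,
    expTY_apply_succ, len, phi]

variable (𝕂 : Type*) [Field 𝕂]

noncomputable def mapDegH :
    MvPolynomial (Fin (k + 1)) 𝕂 →+* AddMonoidAlgebra 𝕂 (ℕ × (Fin d → ℕ)) :=
  AddMonoidAlgebra.mapDomainRingHom 𝕂 (degH α)

lemma mapDegH_monomial (e : Fin (k + 1) →₀ ℕ) (c : 𝕂) :
    mapDegH α 𝕂 (monomial e c) = AddMonoidAlgebra.single (degH α e) c := by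
  rw [mapDegH, ← single_eq_monomial]
  exact AddMonoidAlgebra.mapDomain_single

lemma idealGH_le_ker_mapDegH : idealGH 𝕂 α ≤ RingHom.ker (mapDegH α 𝕂) := by
  rw [idealGH, Ideal.span_le]
  rintro _ ⟨z, w, hphi, hlen, rfl⟩
  rw [SetLike.mem_coe, RingHom.mem_ker, monoT, monoT, map_sub, mapDegH_monomial, mapDegH_monomial,
    degH_expTY, degH_expTY, hphi, Nat.sub_add_cancel hlen, zero_add, sub_self]

variable {α 𝕂}

lemma add_len_eq_and_phi_eq_of_mem_idealGH {i i' : ℕ} {z z' : Fin k → ℕ}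
    (h : monoT 𝕂 i z - monoT 𝕂 i' z' ∈ idealGH 𝕂 α) :
    i + len z = i' + len z' ∧ phi α z = phi α z' := by
  have h0 := idealGH_le_ker_mapDegH α 𝕂 h
  rw [RingHom.mem_ker, monoT, monoT, map_sub, mapDegH_monomial, mapDegH_monomial, sub_eq_zero,
    AddMonoidAlgebra.single_left_inj one_ne_zero, degH_expTY, degH_expTY] at h0
  exact Prod.mk.inj h0

lemma monoT_sub_monoT_mem_idealGH {i : ℕ} {z w : Fin k → ℕ} (hphi : phi α z = phi α w)
    (hlen : i + len z = len w) : monoT 𝕂 i z - monoT 𝕂 0 w ∈ idealGH 𝕂 α := by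
  obtain rfl : i = len w - len z := by omega
  exact Ideal.subset_span ⟨z, w, hphi, by omega, rfl⟩

lemma exists_degH_eq_of_mem_idealGH {p : MvPolynomial (Fin (k + 1)) 𝕂} (hp : p ∈ idealGH 𝕂 α)
    {e : Fin (k + 1) →₀ ℕ} (he : e ∈ p.support) :
    ∃ e' ∈ p.support, e' ≠ e ∧ degH α e' = degH α e :=
  Finsupp.exists_ne_map_eq_of_mapDomain_eq_zero
    (congrArg AddMonoidAlgebra.coeff (idealGH_le_ker_mapDegH α 𝕂 hp)) he

end Homogenization

section LexGroebner

variable {𝕂 : Type*} [Field 𝕂] {k : ℕ}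

lemma leadExp_eq_degree (f : MvPolynomial (Fin (k + 1)) 𝕂) :
    leadExp f = MonomialOrder.lex.degree f := rfl

lemma leadExp_mem_support {f : MvPolynomial (Fin (k + 1)) 𝕂} (hf : f ≠ 0) :
    leadExp f ∈ f.support :=
  MonomialOrder.degree_mem_support (m := MonomialOrder.lex) hf

lemma toLex_le_leadExp {f : MvPolynomial (Fin (k + 1)) 𝕂} {e : Fin (k + 1) →₀ ℕ}
    (he : e ∈ f.support) : toLex e ≤ toLex (leadExp f) :=
  MonomialOrder.lex_le_iff.1 (MonomialOrder.le_degree he)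

lemma monomial_sub_monomial_ne_zero {e e' : Fin (k + 1) →₀ ℕ} (h : e ≠ e') :
    monomial e (1 : 𝕂) - monomial e' 1 ≠ 0 :=
  sub_ne_zero.2 fun h' => h (monomial_left_injective one_ne_zero h')

lemma leadExp_monomial_sub_monomial {e e' : Fin (k + 1) →₀ ℕ} (h : toLex e' < toLex e) :
    leadExp (monomial e (1 : 𝕂) - monomial e' 1) = e := by
  classical
  simp only [leadExp_eq_degree]
  rw [MonomialOrder.degree_sub_of_lt, MonomialOrder.degree_monomial, if_neg one_ne_zero]
  rwa [MonomialOrder.degree_monomial, MonomialOrder.degree_monomial, if_neg one_ne_zero,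
    if_neg one_ne_zero, MonomialOrder.lex_lt_iff]

variable {I : Ideal (MvPolynomial (Fin (k + 1)) 𝕂)} {G : Set (MvPolynomial (Fin (k + 1)) 𝕂)}

lemma IsGroebnerBasis.exists_leadExp_le (hGB : IsGroebnerBasis I G) (hred : IsReducedGB G)
    {f : MvPolynomial (Fin (k + 1)) 𝕂} (hf : f ∈ I) (hf0 : f ≠ 0) :
    ∃ g ∈ G, leadExp g ≤ leadExp f := by
  classical
  have hinit : initTerm f ∈ Ideal.span (initTerm '' G) :=
    hGB.2.2 ▸ Ideal.subset_span ⟨f, ⟨hf, hf0⟩, rfl⟩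
  have himage : initTerm '' G = (fun e => monomial e (1 : 𝕂)) '' (leadExp '' G) := by
    rw [Set.image_image]
    exact Set.image_congr fun g hg => by rw [initTerm, hred.1 g hg]
  rw [himage, mem_ideal_span_monomial_image] at hinit
  obtain ⟨_, ⟨g, hg, rfl⟩, hle⟩ := hinit (leadExp f) (by
    rw [initTerm, support_monomial, if_neg (mem_support_iff.1 (leadExp_mem_support hf0))]
    exact Finset.mem_singleton_self _)
  exact ⟨g, hg, hle⟩

lemma IsReducedGB.eq_leadExp_of_leadExp_le (hGB : IsGroebnerBasis I G) (hred : IsReducedGB G)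
    {g f : MvPolynomial (Fin (k + 1)) 𝕂} (hg : g ∈ G) (hf : f ∈ I) (hf0 : f ≠ 0)
    {e : Fin (k + 1) →₀ ℕ} (he : e ∈ g.support) (hle : leadExp f ≤ e) :
    e = leadExp g ∧ leadExp g ≤ leadExp f := by
  obtain ⟨g', hg', hg'f⟩ := hGB.exists_leadExp_le hred hf hf0
  obtain rfl : g' = g := by
    by_contra hne
    exact hred.2 g hg g' hg' hne e he (hg'f.trans hle)
  refine ⟨toLex.injective (le_antisymm (toLex_le_leadExp he) ?_), hg'f⟩
  exact Finsupp.toLex_monotone (hg'f.trans hle)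

lemma IsReducedGB.eq_of_support_subset (hGB : IsGroebnerBasis I G) (hred : IsReducedGB G)
    {g h : MvPolynomial (Fin (k + 1)) 𝕂} (hg : g ∈ G) (hh : h ∈ I)
    (hcoeff : coeff (leadExp g) h = 1) (hsupp : h.support ⊆ g.support) : g = h := by
  classical
  by_contra hne
  have hd0 : g - h ≠ 0 := sub_ne_zero.2 hne
  have hcancel : coeff (leadExp g) (g - h) = 0 := by rw [coeff_sub, hred.1 g hg, hcoeff, sub_self]
  have hmem := leadExp_mem_support hd0
  have hsub : (g - h).support ⊆ g.support :=
    (support_sub _ g h).trans (Finset.union_subset subset_rfl hsupp)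
  obtain ⟨hlead, -⟩ :=
    hred.eq_leadExp_of_leadExp_le hGB hg (sub_mem (hGB.1 hg) hh) hd0 (hsub hmem) le_rfl
  exact mem_support_iff.1 hmem (hlead ▸ hcancel)

end LexGroebner

section Binomials

variable {𝕂 : Type*} [Field 𝕂] {d k : ℕ} {α : Fin k → Fin d → ℕ}
  {G : Set (MvPolynomial (Fin (k + 1)) 𝕂)}

/-- The leading monomial of `g` has a partner of the same `Γ_H`-degree in `g`; reducedness
forces the partner to be free of `t`, and then `g` is the binomial they span. -/
theorem IsReducedGB.exists_eq_monoT_sub_monoT (hGB : IsGroebnerBasis (idealGH 𝕂 α) G)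
    (hred : IsReducedGB G) {g : MvPolynomial (Fin (k + 1)) 𝕂} (hg : g ∈ G) :
    ∃ a u v, g = monoT 𝕂 a u - monoT 𝕂 0 v ∧ a + len u = len v ∧ phi α u = phi α v ∧
      toLex (expTY 0 v) < toLex (expTY a u) := by
  classical
  have hg0 : g ≠ 0 := fun h => by simpa [h] using hred.1 g hg
  have hlead := leadExp_mem_support hg0
  obtain ⟨e', he', hne, hdeg⟩ := exists_degH_eq_of_mem_idealGH (hGB.1 hg) hlead
  obtain ⟨a, u, hau⟩ := exists_expTY_eq (leadExp g)
  obtain ⟨b, v, rfl⟩ := exists_expTY_eq e'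
  rw [← hau, degH_expTY, degH_expTY, Prod.mk.injEq] at hdeg
  have hlt : toLex (expTY b v) < toLex (expTY a u) :=
    hau ▸ (toLex_le_leadExp he').lt_of_ne (toLex.injective.ne hne)
  have hba : b ≤ a := not_lt.1 fun h => (toLex_expTY_lt_of_lt h u v).not_gt hlt
  have hlt' : toLex (expTY 0 v) < toLex (expTY (a - b) u) := by
    have hshift : expTY (a - b) u + expTY b 0 = expTY a u := by
      rw [expTY_add, Nat.sub_add_cancel hba, add_zero]
    have hshift' : expTY 0 v + expTY b 0 = expTY b v := by rw [expTY_add, zero_add, add_zero]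
    rw [← hshift, ← hshift', toLex_add, toLex_add] at hlt
    exact lt_of_add_lt_add_right hlt
  obtain ⟨-, hdiv⟩ := hred.eq_leadExp_of_leadExp_le hGB hg
    (monoT_sub_monoT_mem_idealGH (𝕂 := 𝕂) hdeg.2.symm (by omega))
    (monomial_sub_monomial_ne_zero (toLex.injective.ne hlt'.ne')) hlead
    (by rw [monoT, monoT, leadExp_monomial_sub_monomial hlt', ← hau, expTY_le_expTY_iff]
        exact ⟨Nat.sub_le a b, le_rfl⟩)
  rw [← hau, monoT, monoT, leadExp_monomial_sub_monomial hlt', expTY_le_expTY_iff] at hdiv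
  obtain rfl : b = 0 := by omega
  refine ⟨a, u, v, hred.eq_of_support_subset hGB hg
    (monoT_sub_monoT_mem_idealGH hdeg.2.symm (by omega)) ?_ ?_, by omega, hdeg.2.symm, hlt⟩
  · rw [← hau, monoT, monoT, coeff_sub, coeff_monomial, coeff_monomial, if_pos rfl,
      if_neg (by rwa [hau]), sub_zero]
  · refine (support_sub _ _ _).trans (Finset.union_subset ?_ ?_) <;>
      refine support_monomial_subset.trans (Finset.singleton_subset_iff.2 ?_)
    exacts [hau ▸ hlead, he']

noncomputable def idealJ (𝕂 : Type*) [Field 𝕂] {k : ℕ}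
    (G : Set (MvPolynomial (Fin (k + 1)) 𝕂)) (j : ℕ) : Ideal (MvPolynomial (Fin k) 𝕂) :=
  Ideal.span {f | ∃ z w : Fin k → ℕ, ∃ i ≤ j,
    monoT 𝕂 i z - monoT 𝕂 0 w ∈ G ∧ f = monoY 𝕂 z - monoY 𝕂 w}

lemma idealJ_mono : Monotone (idealJ 𝕂 G) := fun _ _ h =>
  Ideal.span_mono fun _ ⟨z, w, i, hi, hG, hf⟩ => ⟨z, w, i, hi.trans h, hG, hf⟩

/-- One division step by `G`: the witness is `z' = z - u + v`, where `t^a y^u - y^v ∈ G` has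
leading monomial dividing `t^i y^z`. -/
theorem exists_reduction_step (hGB : IsGroebnerBasis (idealGH 𝕂 α) G) (hred : IsReducedGB G)
    {f : MvPolynomial (Fin (k + 1)) 𝕂} (hf : f ∈ idealGH 𝕂 α) (hf0 : f ≠ 0) {i : ℕ}
    {z : Fin k → ℕ} (hlead : leadExp f = expTY i z) :
    ∃ a ≤ i, ∃ z', len z' = len z + a ∧ phi α z' = phi α z ∧
      toLex (expTY (i - a) z') < toLex (expTY i z) ∧ monoY 𝕂 z - monoY 𝕂 z' ∈ idealJ 𝕂 G a := by
  obtain ⟨g, hg, hdiv⟩ := hGB.exists_leadExp_le hred hf hf0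
  obtain ⟨a, u, v, rfl, hlen, hphi, hlt⟩ := hred.exists_eq_monoT_sub_monoT hGB hg
  rw [monoT, monoT, leadExp_monomial_sub_monomial hlt, hlead, expTY_le_expTY_iff] at hdiv
  obtain ⟨hai, huz⟩ := hdiv
  obtain ⟨r, rfl⟩ : ∃ r, z = r + u := ⟨z - u, (tsub_add_cancel_of_le huz).symm⟩
  refine ⟨a, hai, r + v, ?_, ?_, ?_, ?_⟩
  · rw [len_add, len_add]
    omega
  · rw [phi_add, phi_add, hphi]
  · have hz : expTY i (r + u) = expTY (i - a) r + expTY a u := by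
      rw [expTY_add, Nat.sub_add_cancel hai]
    have hz' : expTY (i - a) (r + v) = expTY (i - a) r + expTY 0 v := by
      rw [expTY_add, add_zero]
    rw [hz, hz', toLex_add, toLex_add]
    exact (add_lt_add_iff_left _).2 hlt
  · rw [← monoY_mul, ← monoY_mul, ← mul_sub]
    exact Ideal.mul_mem_left _ _ (Ideal.subset_span ⟨u, v, a, le_rfl, hg, rfl⟩)

end Binomials

section Descent

variable {𝕂 : Type*} [Field 𝕂] {d k : ℕ} {α : Fin k → Fin d → ℕ}
  {G : Set (MvPolynomial (Fin (k + 1)) 𝕂)}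

/-- Induction on the larger of the two lex exponents of `t^i y^z - y^w`, which every reduction
step decreases. -/
theorem monoY_sub_monoY_mem_idealJ (hGB : IsGroebnerBasis (idealGH 𝕂 α) G)
    (hred : IsReducedGB G) {i j : ℕ} {z w : Fin k → ℕ} (hlen : i + len z = len w)
    (hphi : phi α z = phi α w) (hij : i ≤ j) : monoY 𝕂 z - monoY 𝕂 w ∈ idealJ 𝕂 G j := by
  have : WellFoundedLT (Lex (Fin (k + 1) →₀ ℕ)) := Finsupp.Lex.wellFoundedLT_of_finite
  suffices ∀ μ : Lex (Fin (k + 1) →₀ ℕ), ∀ i z w, i + len z = len w → phi α z = phi α w →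
      i ≤ j → max (toLex (expTY i z)) (toLex (expTY 0 w)) ≤ μ →
      monoY 𝕂 z - monoY 𝕂 w ∈ idealJ 𝕂 G j from this _ i z w hlen hphi hij le_rfl
  intro μ
  induction μ using WellFoundedLT.induction with
  | _ μ ih =>
  intro i z w hlen hphi hij hμ
  rcases lt_trichotomy (toLex (expTY 0 w)) (toLex (expTY i z)) with hlt | heq | hgt
  · obtain ⟨a, hai, z', hlen', hphi', hlt', hz'⟩ := exists_reduction_step hGB hred
      (monoT_sub_monoT_mem_idealGH hphi hlen)
      (monomial_sub_monomial_ne_zero (toLex.injective.ne hlt.ne'))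
      (leadExp_monomial_sub_monomial hlt)
    rw [← sub_add_sub_cancel _ (monoY 𝕂 z')]
    refine add_mem (idealJ_mono (hai.trans hij) hz') (ih _ ?_ (i - a) z' w (by omega)
      (hphi'.trans hphi) (by omega) le_rfl)
    exact (max_lt hlt' hlt).trans_le ((le_max_left _ _).trans hμ)
  · obtain ⟨-, rfl⟩ := expTY_inj.1 (toLex.injective heq)
    rw [sub_self]
    exact zero_mem _
  · obtain rfl : i = 0 := Nat.eq_zero_of_not_pos fun hi => (toLex_expTY_lt_of_lt hi w z).not_gt hgt
    obtain ⟨a, hai, w', hlen', hphi', hlt', hw'⟩ := exists_reduction_step hGB hred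
      (monoT_sub_monoT_mem_idealGH hphi.symm (by omega : 0 + len w = len z))
      (monomial_sub_monomial_ne_zero (toLex.injective.ne hgt.ne'))
      (leadExp_monomial_sub_monomial hgt)
    obtain rfl : a = 0 := Nat.le_zero.1 hai
    rw [← sub_sub_sub_cancel_right _ _ (monoY 𝕂 w')]
    refine sub_mem (ih _ ?_ 0 z w' (by omega) (hphi.trans hphi'.symm) hij le_rfl)
      (idealJ_mono (Nat.zero_le j) hw')
    exact (max_lt hgt hlt').trans_le ((le_max_right _ _).trans hμ)

end Descent

theorem stmt5_general (𝕂 : Type*) [Field 𝕂] {d k : ℕ} (α : Fin k → Fin d → ℕ)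
    (G : Set (MvPolynomial (Fin (k + 1)) 𝕂))
    (hGB : IsGroebnerBasis (idealGH 𝕂 α) G)
    (hred : IsReducedGB G) :
    ∀ j : ℕ,
      Ideal.span {f : MvPolynomial (Fin k) 𝕂 | ∃ z w : Fin k → ℕ, ∃ i ≤ j,
          monoT 𝕂 i z - monoT 𝕂 0 w ∈ G ∧ f = monoY 𝕂 z - monoY 𝕂 w} =
        idealI 𝕂 α j := by
  intro j
  refine le_antisymm (Ideal.span_le.2 ?_) (Ideal.span_le.2 ?_)
  · rintro _ ⟨z, w, i, hij, hg, rfl⟩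
    obtain ⟨hlen, hphi⟩ := add_len_eq_and_phi_eq_of_mem_idealGH (hGB.1 hg)
    exact Ideal.subset_span ⟨z, w, hphi, by rw [Nat.dist]; omega, rfl⟩
  · rintro _ ⟨z, w, hphi, hdist, rfl⟩
    rw [Nat.dist] at hdist
    rcases le_total (len z) (len w) with h | h
    · exact monoY_sub_monoY_mem_idealJ hGB hred (i := len w - len z) (by omega) hphi (by omega)
    · rw [← neg_sub]
      exact neg_mem (monoY_sub_monoY_mem_idealJ hGB hred (i := len z - len w) (by omega) hphi.symm
        (by omega))

/-- If `G` is a reduced Gröbner basis of `I_{Γ_H}` w.r.t. the lex order with `t`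
greatest, then for every `j ≥ 0` the ideal
`J_j = ⟨y^z − y^w : t^i y^z − y^w ∈ G for some i ≤ j⟩` equals `I_j`. -/
theorem stmt5 (𝕂 : Type*) [Field 𝕂] {d k : ℕ} (α : Fin k → Fin d → ℕ)
    (hne : ∀ i, α i ≠ 0)
    (hmin : ∀ i, α i ∉ AddSubmonoid.closure (α '' {j | j ≠ i}))
    (G : Set (MvPolynomial (Fin (k + 1)) 𝕂))
    (hGB : IsGroebnerBasis (idealGH 𝕂 α) G)
    (hred : IsReducedGB G) :
    ∀ j : ℕ,
      Ideal.span {f : MvPolynomial (Fin k) 𝕂 | ∃ z w : Fin k → ℕ, ∃ i ≤ j,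
          monoT 𝕂 i z - monoT 𝕂 0 w ∈ G ∧ f = monoY 𝕂 z - monoY 𝕂 w} =
        idealI 𝕂 α j :=
  stmt5_general 𝕂 α G hGB hred
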